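/- Let G be a centerless group and A ⊆ G, and suppose that for every ordinal α the centralizer of A in the α-th stage of the automorphism tower is trivial: C_{G^α}(A) = {e}. Then the automorphism tower of G stabilizes and τ_G < (|G|^{|A|} + ℵ₀)⁺, the successor cardinal of |G|^{|A|} + ℵ₀. -/

import Mathlib

universe u

/-- The automorphism tower of a centerless group `G`: an ordinal-indexed increasing
continuous chain of groups, starting at `G`, where each successor stage is (identified
with) the automorphism group of the previous stage via the conjugation embedding. -/
structure AutTower (G : Type u) [Group G] where
  /-- the `o`-th stage `G^o` of the tower -/
  Stage : Ordinal.{u} → GrpCat.{u}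
  /-- the inclusion maps of the tower -/
  map : ∀ ⦃o₁ o₂ : Ordinal.{u}⦄, o₁ ≤ o₂ → (↥(Stage o₁) →* ↥(Stage o₂))
  map_id : ∀ (o : Ordinal.{u}) (x : ↥(Stage o)), map le_rfl x = x
  map_comp : ∀ ⦃o₁ o₂ o₃ : Ordinal.{u}⦄ (h₁ : o₁ ≤ o₂) (h₂ : o₂ ≤ o₃) (x : ↥(Stage o₁)),
      map h₂ (map h₁ x) = map (h₁.trans h₂) x
  map_injective : ∀ ⦃o₁ o₂ : Ordinal.{u}⦄ (h : o₁ ≤ o₂), Function.Injective (map h)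
  /-- the identification of `G` with the `0`-th stage -/
  emb0 : G ≃* ↥(Stage 0)
  /-- the identification of the `(o+1)`-st stage with `Aut(G^o)` -/
  succIso : ∀ o : Ordinal.{u}, ↥(Stage (o + 1)) ≃* MulAut ↥(Stage o)
  /-- under the above identification, the inclusion `G^o ≤ G^{o+1}` is `g ↦` conjugation by `g` -/
  succIso_map : ∀ (o : Ordinal.{u}) (x : ↥(Stage o)),
      succIso o (map (show o ≤ o + 1 from le_self_add) x) = MulAut.conj x
  /-- at limit stages the tower is continuous: `G^δ = ⋃_{α<δ} G^α` -/
  limit_covers : ∀ (o : Ordinal.{u}), Order.IsSuccLimit o → ∀ x : ↥(Stage o),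
      ∃ (o' : Ordinal.{u}) (h : o' < o), x ∈ Set.range (map h.le)

namespace AutTower

variable {G : Type u} [Group G]

/-- the embedding of `G` into the `o`-th stage of its automorphism tower -/
def embed (T : AutTower G) (o : Ordinal.{u}) : G →* ↥(T.Stage o) :=
  (T.map (show (0 : Ordinal.{u}) ≤ o from zero_le)).comp T.emb0.toMonoidHom

/-- `G^{o+1} = G^o`, i.e. the inclusion of stage `o` into stage `o+1` is onto -/
def StabilizesAt (T : AutTower G) (o : Ordinal.{u}) : Prop :=
  Function.Surjective (T.map (show o ≤ o + 1 from le_self_add))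

end AutTower

/-!
An element of `G^{α+1} = Aut(G^α)` is determined by its values on `A`, because `C_{G^{α+1}}(A)`
is trivial; hence `|G^{α+1}| ≤ |G^α|^{|A|}`, and every stage below `κ⁺`, `κ = |G|^{|A|} + ℵ₀`,
has size at most `κ`. If the tower did not stop below `κ⁺`, pick `x_α ∈ G^{α+1} \ G^α` for
`α < κ⁺`. As `C_{G^{κ⁺}}(A)` is trivial, the maps `a ↦ x_α a x_α⁻¹` are pairwise distinct, and
each takes values in `G^α`. Only `κ` of them take values in a fixed `G^β`, so their indices are
bounded by some `g(β) < κ⁺`. At a closure point `δ` of `g` of cofinality `> |A|`, the map of `x_δ`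
already takes values in some `G^β` with `β < δ`, so `δ < g(β) < δ`.
-/

open Cardinal Order Set

namespace Ordinal

theorem exists_lt_forall_lt_of_mk_lt_cof {s : Set Ordinal.{u}} {a : Ordinal.{u}}
    (hs : #s < (lift.{u + 1} a).cof) (hsa : ∀ i ∈ s, i < a) : ∃ γ < a, ∀ i ∈ s, i < γ := by
  refine ⟨_, sSup_add_one_lt_of_lt_cof hs hsa, fun i hi => ?_⟩
  have hbdd : BddAbove ((· + 1) '' s) :=
    ⟨a, by rintro _ ⟨j, hj, rfl⟩; exact add_one_le_of_lt (hsa j hj)⟩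
  exact (lt_add_one i).trans_le (le_csSup hbdd (mem_image_of_mem _ hi))

theorem iSup_Iio_add_one_lt_ord {ν : Cardinal.{u}} (hν : ν.IsRegular)
    {f : Ordinal.{u} → Ordinal.{u}} (hf : ∀ x < ν.ord, f x < ν.ord) {x : Ordinal.{u}}
    (hx : x < ν.ord) :
    ⨆ β : Iio x, f β + 1 < ν.ord := by
  refine lift_iSup_add_one_lt_of_lt_cof ?_ fun β => hf β (β.2.trans hx)
  rw [Cardinal.mk_Iio_ordinal, Cardinal.lift_lift, ← lift_cof, hν.cof_ord, Cardinal.lift_lt]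
  exact lt_ord.mp hx

noncomputable def supIterate (H : Ordinal.{u} → Ordinal.{u}) (i : Ordinal.{u}) : Ordinal.{u} :=
  ⨆ j : Iio i, H (supIterate H j)
termination_by i
decreasing_by exact j.2

theorem supIterate_eq (H : Ordinal.{u} → Ordinal.{u}) (i : Ordinal.{u}) :
    supIterate H i = ⨆ j : Iio i, H (supIterate H j) := by
  rw [supIterate]

theorem le_supIterate (H : Ordinal.{u} → Ordinal.{u}) {i j : Ordinal.{u}} (h : j < i) :
    H (supIterate H j) ≤ supIterate H i := by
  rw [supIterate_eq H i]
  exact Ordinal.le_iSup (fun j : Iio i => H (supIterate H j)) ⟨j, h⟩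

theorem supIterate_lt {H : Ordinal.{u} → Ordinal.{u}} {c : Ordinal.{u}} (hH : ∀ x < c, H x < c) :
    ∀ i : Ordinal.{u}, i.card < c.cof → supIterate H i < c := by
  intro i
  induction i using WellFoundedLT.induction with
  | _ i IH =>
    intro hi
    rw [supIterate_eq]
    refine lift_iSup_lt_of_lt_cof ?_ fun j => hH _ (IH j j.2 ((card_le_card j.2.le).trans_lt hi))
    rwa [Cardinal.mk_Iio_ordinal, Cardinal.lift_lift, ← lift_cof, Cardinal.lift_lt]

theorem exists_lt_ord_cof_eq_forall_lt {ν μ : Cardinal.{u}} (hν : ν.IsRegular) (hμ : μ.IsRegular)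
    (hμν : μ < ν) (g : Ordinal.{u} → Ordinal.{u}) (hg : ∀ β < ν.ord, g β < ν.ord) :
    ∃ δ < ν.ord, δ.cof = μ ∧ ∀ β < δ, g β < δ := by
  set H : Ordinal.{u} → Ordinal.{u} := fun x => ⨆ β : Iio (x + 1), max β.1 (g β) + 1
  have hH : ∀ x < ν.ord, H x < ν.ord := fun x hx =>
    iSup_Iio_add_one_lt_ord hν (fun β hβ => max_lt hβ (hg β hβ))
      ((isSuccLimit_ord hν.aleph0_le).add_one_lt hx)
  have lt_H : ∀ {β x}, β ≤ x → max β (g β) < H x := fun {β x} h =>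
    Ordinal.lt_iSup_add_one (fun β : Iio (x + 1) => max β.1 (g β)) ⟨β, lt_add_one_iff.2 h⟩
  have hstrictMono : StrictMono fun j : Iio μ.ord => H (supIterate H j) := fun j k hjk =>
    (le_supIterate H hjk).trans_lt ((le_max_left _ _).trans_lt (lt_H le_rfl))
  have hμlim : IsSuccLimit μ.ord := isSuccLimit_ord hμ.aleph0_le
  refine ⟨supIterate H μ.ord, supIterate_lt hH _ (by rwa [card_ord, hν.cof_ord]), ?_,
    fun β hβ => ?_⟩
  · rw [supIterate_eq, cof_iSup_Iio hstrictMono hμlim.isSuccPrelimit, hμ.cof_ord]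
  · rw [supIterate_eq, Ordinal.lt_iSup_iff] at hβ
    obtain ⟨⟨j, hj⟩, hβj⟩ := hβ
    have hj1 : j + 1 < μ.ord := hμlim.add_one_lt hj
    calc g β < H (supIterate H (j + 1)) :=
          (le_max_right _ _).trans_lt (lt_H (hβj.le.trans (le_supIterate H (lt_add_one j))))
      _ ≤ supIterate H μ.ord := le_supIterate H hj1

end Ordinal

namespace Cardinal

theorem exists_isRegular_lt_le {a κ : Cardinal.{u}} (ha : a < κ) (hκ : ℵ₀ ≤ κ) :
    ∃ μ : Cardinal.{u}, μ.IsRegular ∧ a < μ ∧ μ ≤ κ := by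
  rcases lt_or_ge a ℵ₀ with hfin | hinf
  · exact ⟨ℵ₀, isRegular_aleph0, hfin, hκ⟩
  · exact ⟨succ a, isRegular_succ hinf, lt_succ a, succ_le_of_lt ha⟩

theorem power_add_aleph0_pow_le {g a : Cardinal.{u}} (hag : a ≤ g) :
    (g ^ a + ℵ₀) ^ a ≤ g ^ a + ℵ₀ := by
  rcases lt_or_ge a ℵ₀ with hfin | hinf
  · exact pow_le le_add_self hfin
  · have hg : ℵ₀ ≤ g ^ a :=
      hinf.trans (cantor' a (one_lt_aleph0.trans_le (hinf.trans hag))).le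
    rw [add_eq_left hg hg, ← power_mul, mul_eq_self hinf]

theorem not_injOn_of_forall_isSuccLimit_exists_mem {κ : Cardinal.{u}} {ι Y : Type u}
    (hκ : ℵ₀ ≤ κ) (hpow : κ ^ #ι ≤ κ) (P : Ordinal.{u} → Set Y)
    (hP : MonotoneOn P (Iio (succ κ).ord)) (hPκ : ∀ β < (succ κ).ord, #(P β) ≤ κ)
    (f : Ordinal.{u} → ι → Y)
    (hf : ∀ δ < (succ κ).ord, IsSuccLimit δ → ∀ i, ∃ β < δ, f δ i ∈ P β) :
    ¬ InjOn f (Iio (succ κ).ord) := by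
  intro hinj
  have hreg : (succ κ).IsRegular := isRegular_succ hκ
  have hικ : #ι < κ :=
    (cantor' _ (one_lt_aleph0.trans_le hκ)).trans_le hpow
  have hbound : ∀ β < (succ κ).ord, ∃ γ < (succ κ).ord,
      ∀ α ∈ {α | α < (succ κ).ord ∧ ∀ i, f α i ∈ P β}, α < γ := by
    intro β hβ
    refine Ordinal.exists_lt_forall_lt_of_mk_lt_cof ?_ fun α hα => hα.1
    have hinj' : Function.Injective fun α : {α | α < (succ κ).ord ∧ ∀ i, f α i ∈ P β} =>
        fun i => (⟨f α i, α.2.2 i⟩ : P β) := fun α α' h =>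
      Subtype.ext (hinj α.2.1 α'.2.1 (funext fun i => congrArg Subtype.val (congrFun h i)))
    have hcard : #(ι → P β) < succ κ := by
      rw [← power_def]
      exact ((power_le_power_right (hPκ β hβ)).trans hpow).trans_lt (lt_succ κ)
    rw [← Ordinal.lift_cof, hreg.cof_ord]
    have := (lift_mk_le_lift_mk_of_injective hinj').trans_lt (lift_lt.2 hcard)
    rwa [lift_id'.{u, u + 1}] at this
  choose! g hgκ hg using hbound
  obtain ⟨μ, hμ, hιμ, hμκ⟩ := exists_isRegular_lt_le hικ hκ
  obtain ⟨δ, hδκ, hδμ, hδg⟩ :=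
    Ordinal.exists_lt_ord_cof_eq_forall_lt hreg hμ (hμκ.trans_lt (lt_succ κ)) g hgκ
  have hδ : IsSuccLimit δ := Ordinal.one_lt_cof_iff.1 (hδμ ▸ one_lt_aleph0.trans_le hμ.aleph0_le)
  choose β hβδ hβ using hf δ hδκ hδ
  have hsup : ⨆ i, β i < δ := Ordinal.iSup_lt_of_lt_cof (hδμ ▸ hιμ) hβδ
  have hsupκ : ⨆ i, β i < (succ κ).ord := hsup.trans hδκ
  refine (hg _ hsupκ δ ⟨hδκ, fun i => ?_⟩).not_gt (hδg _ hsup)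
  exact hP ((hβδ i).trans hδκ) hsupκ (Ordinal.le_iSup β i) (hβ i)

end Cardinal

theorem Subgroup.eq_of_conj_eq_of_centralizer_eq_bot {H : Type*} [Group H] {S : Set H}
    (hS : Subgroup.centralizer S = ⊥) {x y : H} (h : ∀ s ∈ S, x * s * x⁻¹ = y * s * y⁻¹) :
    x = y := by
  have hmem : y⁻¹ * x ∈ Subgroup.centralizer S := fun s hs => by
    have := h s hs
    calc s * (y⁻¹ * x) = y⁻¹ * (y * s * y⁻¹) * x := by group
      _ = y⁻¹ * (x * s * x⁻¹) * x := by rw [this]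
      _ = y⁻¹ * x * s := by group
  rw [hS, Subgroup.mem_bot, inv_mul_eq_one] at hmem
  exact hmem.symm

namespace AutTower

variable {G : Type u} [Group G] (T : AutTower G)

theorem map_embed {o₁ o₂ : Ordinal.{u}} (h : o₁ ≤ o₂) (g : G) :
    T.map h (T.embed o₁ g) = T.embed o₂ g :=
  T.map_comp zero_le h (T.emb0 g)

theorem conj_map_eq_map_succIso (o : Ordinal.{u}) (σ : T.Stage (o + 1)) (y : T.Stage o) :
    σ * T.map le_self_add y * σ⁻¹ = T.map le_self_add (T.succIso o σ y) := by
  apply (T.succIso o).injective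
  ext z
  simp [T.succIso_map, MulAut.mul_apply, MulAut.inv_def, MulAut.conj_apply, mul_assoc]

-- The copy of `G^β` inside `G^γ`; empty unless `β ≤ γ`.
def rangeIn (β γ : Ordinal.{u}) : Set (T.Stage γ) :=
  ⋃ h : β ≤ γ, range (T.map h)

theorem rangeIn_mono {β β' γ : Ordinal.{u}} (hβ : β ≤ β') (hβ' : β' ≤ γ) :
    T.rangeIn β γ ⊆ T.rangeIn β' γ := by
  rintro _ ⟨_, ⟨h, rfl⟩, y, rfl⟩
  exact mem_iUnion.2 ⟨hβ', T.map hβ y, T.map_comp hβ hβ' y⟩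

theorem mk_rangeIn_le (β γ : Ordinal.{u}) : #(T.rangeIn β γ) ≤ #(T.Stage β) := by
  by_cases h : β ≤ γ
  · simpa [rangeIn, h] using mk_range_le
  · simp [rangeIn, h]

theorem rangeIn_subset_of_isSuccLimit {δ γ : Ordinal.{u}} (hδ : IsSuccLimit δ) :
    T.rangeIn δ γ ⊆ ⋃ β < δ, T.rangeIn β γ := by
  rintro _ ⟨_, ⟨h, rfl⟩, x, rfl⟩
  obtain ⟨β, hβ, y, rfl⟩ := T.limit_covers δ hδ x
  exact mem_biUnion hβ (mem_iUnion.2 ⟨hβ.le.trans h, y, (T.map_comp _ _ y).symm⟩)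

theorem conj_mem_rangeIn {α γ : Ordinal.{u}} {y : T.Stage γ} (hy : y ∈ T.rangeIn (α + 1) γ)
    (g : G) : y * T.embed γ g * y⁻¹ ∈ T.rangeIn α γ := by
  obtain ⟨h, σ, rfl⟩ := mem_iUnion.1 hy
  refine mem_iUnion.2 ⟨le_self_add.trans h, T.succIso α σ (T.embed α g), ?_⟩
  rw [← T.map_comp le_self_add h, ← T.conj_map_eq_map_succIso, map_mul, map_mul, map_inv,
    T.map_embed, T.map_embed]

theorem exists_mem_rangeIn_succ_notMem {α γ : Ordinal.{u}} (hα : ¬ T.StabilizesAt α)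
    (h : α + 1 ≤ γ) : ∃ y ∈ T.rangeIn (α + 1) γ, y ∉ T.rangeIn α γ := by
  obtain ⟨x, hx⟩ := not_forall.1 hα
  refine ⟨T.map h x, mem_iUnion.2 ⟨h, x, rfl⟩, fun hmem => hx ?_⟩
  obtain ⟨_, z, hz⟩ := mem_iUnion.1 hmem
  exact ⟨z, T.map_injective h (by rw [T.map_comp, hz])⟩

theorem mk_stage_le_of_isSuccLimit {κ : Cardinal.{u}} (hκ : ℵ₀ ≤ κ) {δ : Ordinal.{u}}
    (hδ : IsSuccLimit δ) (hδκ : δ.card ≤ κ) (h : ∀ β < δ, #(T.Stage β) ≤ κ) :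
    #(T.Stage δ) ≤ κ := by
  have hcover : (univ : Set (T.Stage δ)) ⊆ ⋃ β : Iio δ, range (T.map β.2.le) := fun x _ => by
    obtain ⟨β, hβ, hx⟩ := T.limit_covers δ hδ x
    exact mem_iUnion.2 ⟨⟨β, hβ⟩, hx⟩
  have hsup : ⨆ β : Iio δ, lift.{u + 1} #(range (T.map β.2.le)) ≤ lift.{u + 1} κ :=
    ciSup_le' fun β => lift_le.2 (mk_range_le.trans (h β β.2))
  rw [← lift_le.{u + 1}, ← mk_univ]
  calc lift.{u + 1} #(univ : Set (T.Stage δ))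
      ≤ lift.{u + 1} #(⋃ β : Iio δ, range (T.map β.2.le)) := lift_le.2 (mk_le_mk_of_subset hcover)
    _ ≤ lift.{u} #(Iio δ) * ⨆ β : Iio δ, lift.{u + 1} #(range (T.map β.2.le)) :=
      mk_iUnion_le_lift _
    _ ≤ lift.{u + 1} κ * lift.{u + 1} κ := by
      rw [mk_Iio_ordinal, lift_id'.{u, u + 1}]
      exact mul_le_mul' (lift_le.2 hδκ) hsup
    _ = lift.{u + 1} κ := by rw [← lift_mul, mul_eq_self hκ]

theorem mk_stage_succ_le {A : Set G} (hcent : ∀ α, Subgroup.centralizer (T.embed α '' A) = ⊥)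
    (α : Ordinal.{u}) : #(T.Stage (α + 1)) ≤ #(T.Stage α) ^ #A := by
  have hinj : Function.Injective fun (σ : T.Stage (α + 1)) (a : A) =>
      T.succIso α σ (T.embed α a) := fun σ τ hστ => by
    refine Subgroup.eq_of_conj_eq_of_centralizer_eq_bot (hcent (α + 1)) ?_
    rintro _ ⟨a, ha, rfl⟩
    rw [← T.map_embed le_self_add, T.conj_map_eq_map_succIso, T.conj_map_eq_map_succIso]
    exact congrArg _ (congrFun hστ ⟨a, ha⟩)
  exact (mk_le_of_injective hinj).trans_eq (power_def _ _).symm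

theorem mk_le_power_mk {A : Set G} (hcent : ∀ α, Subgroup.centralizer (T.embed α '' A) = ⊥) :
    #G ≤ #G ^ #A := by
  have hG : #G = #(T.Stage 0) := mk_congr T.emb0.toEquiv
  calc #G ≤ #(T.Stage (0 + 1)) := hG.trans_le (mk_le_of_injective (T.map_injective le_self_add))
    _ ≤ #G ^ #A := hG ▸ T.mk_stage_succ_le hcent 0

theorem mk_stage_le {A : Set G} (hcent : ∀ α, Subgroup.centralizer (T.embed α '' A) = ⊥)
    {κ : Cardinal.{u}} (hκ : ℵ₀ ≤ κ) (hG : #G ≤ κ) (hpow : κ ^ #A ≤ κ) :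
    ∀ α < (succ κ).ord, #(T.Stage α) ≤ κ := by
  intro α
  induction α using Ordinal.limitRecOn with
  | zero => exact fun _ => (mk_congr T.emb0.toEquiv.symm).trans_le hG
  | add_one α IH =>
    exact fun hα => (T.mk_stage_succ_le hcent α).trans
      ((power_le_power_right (IH ((lt_add_one α).trans hα))).trans hpow)
  | limit δ hδ IH =>
    exact fun hδκ => T.mk_stage_le_of_isSuccLimit hκ hδ (lt_succ_iff.1 (lt_ord.1 hδκ))
      fun β hβ => IH β hβ (hβ.trans hδκ)

theorem exists_stabilizesAt_lt {A : Set G}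
    (hcent : ∀ α, Subgroup.centralizer (T.embed α '' A) = ⊥) {κ : Cardinal.{u}} (hκ : ℵ₀ ≤ κ)
    (hG : #G ≤ κ) (hpow : κ ^ #A ≤ κ) : ∃ α < (succ κ).ord, T.StabilizesAt α := by
  by_contra! hT
  have hx : ∀ α < (succ κ).ord,
      ∃ y ∈ T.rangeIn (α + 1) (succ κ).ord, y ∉ T.rangeIn α (succ κ).ord := fun α hα =>
    T.exists_mem_rangeIn_succ_notMem (hT α hα)
      ((isSuccLimit_ord (hκ.trans (le_succ κ))).add_one_lt hα).le
  choose! x hx_mem hx_notMem using hx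
  set f : Ordinal.{u} → A → T.Stage (succ κ).ord := fun α a => x α * T.embed _ a * (x α)⁻¹
  have hne : ∀ α < (succ κ).ord, ∀ α' < α, f α ≠ f α' := by
    intro α hα α' hα'α heq
    have hxx : x α = x α' := Subgroup.eq_of_conj_eq_of_centralizer_eq_bot (hcent _) <| by
      rintro _ ⟨a, ha, rfl⟩
      exact congrFun heq ⟨a, ha⟩
    exact hx_notMem α hα (hxx ▸ T.rangeIn_mono (add_one_le_of_lt hα'α) hα.le
      (hx_mem α' (hα'α.trans hα)))
  refine not_injOn_of_forall_isSuccLimit_exists_mem hκ hpow (fun β => T.rangeIn β (succ κ).ord)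
    (fun β _ β' hβ' hββ' => T.rangeIn_mono hββ' hβ'.le)
    (fun β hβ => (T.mk_rangeIn_le _ _).trans (T.mk_stage_le hcent hκ hG hpow β hβ)) f
    (fun δ hδκ hδ a => ?_) fun α hα α' hα' heq => ?_
  · simpa using T.rangeIn_subset_of_isSuccLimit hδ (T.conj_mem_rangeIn (hx_mem δ hδκ) a)
  rcases lt_trichotomy α α' with h | h | h
  · exact (hne α' hα' α h heq.symm).elim
  · exact h
  · exact (hne α hα α' h heq).elim

end AutTower

theorem autTower_stabilizes_of_centralizer_trivial_general {G : Type u} [Group G]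
    (A : Set G) (T : AutTower G)
    (hcent : ∀ α : Ordinal.{u}, Subgroup.centralizer (⇑(T.embed α) '' A) = ⊥) :
    ∃ α : Ordinal.{u},
      α < (Order.succ (Cardinal.mk G ^ Cardinal.mk ↥A + Cardinal.aleph0)).ord ∧
      T.StabilizesAt α :=
  T.exists_stabilizesAt_lt hcent le_add_self ((T.mk_le_power_mk hcent).trans le_self_add)
    (power_add_aleph0_pow_le (mk_set_le A))

/-- If `G` is centerless and for every ordinal `α` the centralizer of `A` in `G^α`
is trivial, `C_{G^α}(A) = {e}` (with `A ⊆ G` regarded as a subset of `G^α` via the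
tower embedding), then the automorphism tower of `G` stabilizes and
`τ_G < (|G|^{|A|} + ℵ₀)⁺`. -/
theorem autTower_stabilizes_of_centralizer_trivial {G : Type u} [Group G]
    (hG : Subgroup.center G = ⊥) (A : Set G) (T : AutTower G)
    (hcent : ∀ α : Ordinal.{u}, Subgroup.centralizer (⇑(T.embed α) '' A) = ⊥) :
    ∃ α : Ordinal.{u},
      α < (Order.succ (Cardinal.mk G ^ Cardinal.mk ↥A + Cardinal.aleph0)).ord ∧
      T.StabilizesAt α :=
  autTower_stabilizes_of_centralizer_trivial_general A T hcent
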